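/- arXiv:math/9911169 — 2 statements merged into one kernel-verified Lean document; each statement's English description precedes it below -/
import Mathlib

section
/- With the Fock space operators a_i^+ defined by the explicit action formulas on the basis of W_p, for all i < j the creation operators q-supercommute: a_i^+ a_j^+ - (-1)^{θ_i θ_j} q · a_j^+ a_i^+ = 0 as operators on W_p. -/
noncomputable section

/-- q-integer [x] = (q^x - q^{-x})/(q - q^{-1}). -/
def qb (q : ℝ) (x : ℤ) : ℝ := (q ^ x - q ^ (-x)) / (q - q⁻¹)

/-- q-factorial [x]! = [1][2]⋯[x]. -/
def qfact (q : ℝ) (x : ℕ) : ℝ := ∏ k ∈ Finset.Icc 1 x, qb q (k : ℤ)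

/-- Free module on all tuples; the Fock space W_p is spanned by valid tuples. -/
abbrev Wp (N : ℕ) := (Fin N → ℕ) →₀ ℝ

/-- θ grading: 0 for the first n (bosonic) indices, 1 for the rest (fermionic). -/
def th (n : ℕ) {N : ℕ} (i : Fin N) : ℕ := if (i : ℕ) < n then 0 else 1

/-- valid tuples: fermionic entries ≤ 1 and total sum ≤ p. -/
def valid (n : ℕ) {N : ℕ} (p : ℕ) (r : Fin N → ℕ) : Prop :=
  (∀ i : Fin N, n ≤ (i : ℕ) → r i ≤ 1) ∧ ∑ i, r i ≤ p

/-- sign (-1)^{θ_i (θ_1 r_1 + ⋯ + θ_{i-1} r_{i-1})}. -/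
def sgn (n : ℕ) {N : ℕ} (i : Fin N) (r : Fin N → ℕ) : ℝ :=
  (-1 : ℝ) ^ (th n i * ∑ j ∈ Finset.univ.filter (fun j : Fin N => j < i), th n j * r j)

/-- r_1 + ⋯ + r_{i-1}. -/
def Ssum {N : ℕ} (i : Fin N) (r : Fin N → ℕ) : ℕ :=
  ∑ j ∈ Finset.univ.filter (fun j : Fin N => j < i), r j

/-- creation operator a_i^+. -/
def aP (n : ℕ) {N : ℕ} (p : ℕ) (q : ℝ) (i : Fin N) : Wp N →ₗ[ℝ] Wp N :=
  Finsupp.lift (Wp N) ℝ (Fin N → ℕ) fun r =>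
    (sgn n i r * q ^ (-(Ssum i r : ℤ)) * (1 - (th n i : ℝ) * (r i : ℝ)) *
      Real.sqrt (qb q ((r i : ℤ) + 1) * qb q ((p : ℤ) - ∑ l, (r l : ℤ)))) •
      Finsupp.single (Function.update r i (r i + 1)) 1

/-- annihilation operator a_i^-. -/
def aM (n : ℕ) {N : ℕ} (p : ℕ) (q : ℝ) (i : Fin N) : Wp N →ₗ[ℝ] Wp N :=
  Finsupp.lift (Wp N) ℝ (Fin N → ℕ) fun r =>
    (sgn n i r * q ^ ((Ssum i r : ℤ)) *
      Real.sqrt (qb q (r i : ℤ) * qb q ((p : ℤ) - ∑ l, (r l : ℤ) + 1))) •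
      Finsupp.single (Function.update r i (r i - 1)) 1

/-- Cartan operator H_i, diagonal on the basis. -/
def Hop (n : ℕ) {N : ℕ} (p : ℕ) (i : Fin N) : Wp N →ₗ[ℝ] Wp N :=
  Finsupp.lift (Wp N) ℝ (Fin N → ℕ) fun r =>
    ((p : ℝ) - (-1 : ℝ) ^ th n i * (r i : ℝ) - ∑ j, (r j : ℝ)) • Finsupp.single r 1

/-! Both a_i^+ a_j^+ and a_j^+ a_i^+ send |p; r) to a multiple of |p; r + e_i + e_j), so only the
two coefficients need comparing. For i < j, raising r_j first leaves the coefficient of a_i^+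
unchanged, whereas raising r_i first adds one to r_1 + ⋯ + r_{j-1}: this produces the factor q⁻¹
and the sign (-1)^{θ_i θ_j} in the coefficient of a_j^+. The square roots agree because
[r_i + 1] and [r_j + 1] are nonnegative, so both products split into the same four factors. -/

open Function

def creationCoeff (n : ℕ) {N : ℕ} (p : ℕ) (q : ℝ) (i : Fin N) (r : Fin N → ℕ) : ℝ :=
  sgn n i r * q ^ (-(Ssum i r : ℤ)) * (1 - (th n i : ℝ) * (r i : ℝ)) *
    Real.sqrt (qb q ((r i : ℤ) + 1) * qb q ((p : ℤ) - ∑ l, (r l : ℤ)))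

theorem aP_single (n : ℕ) {N : ℕ} (p : ℕ) (q : ℝ) (i : Fin N) (r : Fin N → ℕ) :
    aP n p q i (Finsupp.single r 1) =
      creationCoeff n p q i r • Finsupp.single (update r i (r i + 1)) 1 := by
  simp [aP, creationCoeff]

theorem qb_nonneg {q : ℝ} (hq : 0 < q) {x : ℤ} (hx : 0 ≤ x) : 0 ≤ qb q x := by
  have hx' : -x ≤ x := neg_le_self hx
  rcases lt_trichotomy q 1 with h | rfl | h
  · refine div_nonneg_of_nonpos (sub_nonpos.mpr (zpow_le_zpow_right_of_le_one₀ hq h.le hx')) ?_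
    linarith [(one_lt_inv₀ hq).mpr h]
  · simp [qb]
  · refine div_nonneg (sub_nonneg.mpr (zpow_le_zpow_right₀ h.le hx')) ?_
    linarith [inv_lt_one_of_one_lt₀ h]

theorem sum_mul_update_succ {ι : Type*} [DecidableEq ι] (s : Finset ι) (w r : ι → ℕ) (i : ι) :
    ∑ k ∈ s, w k * update r i (r i + 1) k = ∑ k ∈ s, w k * r k + if i ∈ s then w i else 0 := by
  have hupd : ∀ k, update r i (r i + 1) k = r k + if k = i then 1 else 0 := by
    intro k; by_cases hk : k = i <;> simp [hk]
  simp [hupd, mul_add, Finset.sum_add_distrib]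

section

variable {n : ℕ} {N : ℕ} {i j : Fin N} (r : Fin N → ℕ)

theorem sgn_update_succ_of_le (hji : j ≤ i) : sgn n j (update r i (r i + 1)) = sgn n j r := by
  simp [sgn, sum_mul_update_succ, not_lt.mpr hji]

theorem sgn_update_succ_of_lt (hij : i < j) :
    sgn n j (update r i (r i + 1)) = sgn n j r * (-1) ^ (th n j * th n i) := by
  simp [sgn, sum_mul_update_succ, hij, mul_add, pow_add]

theorem Ssum_update_succ_of_le (hji : j ≤ i) : Ssum j (update r i (r i + 1)) = Ssum j r := by
  simpa [Ssum, not_lt.mpr hji] using sum_mul_update_succ {k | k < j} 1 r i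

theorem Ssum_update_succ_of_lt (hij : i < j) : Ssum j (update r i (r i + 1)) = Ssum j r + 1 := by
  simpa [Ssum, hij] using sum_mul_update_succ {k | k < j} 1 r i

theorem sum_cast_update_succ (i : Fin N) :
    ∑ l, (update r i (r i + 1) l : ℤ) = ∑ l, (r l : ℤ) + 1 := by
  simpa using congrArg (Nat.cast : ℕ → ℤ) (sum_mul_update_succ Finset.univ 1 r i)

end

theorem creationCoeff_mul_update_succ_of_lt {n N p : ℕ} {q : ℝ} (hq : 0 < q) {i j : Fin N}
    (hij : i < j) (r : Fin N → ℕ) :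
    creationCoeff n p q j r * creationCoeff n p q i (update r j (r j + 1)) =
      ((-1) ^ (th n i * th n j) * q) *
        (creationCoeff n p q i r * creationCoeff n p q j (update r i (r i + 1))) := by
  simp only [creationCoeff, sgn_update_succ_of_le r hij.le, Ssum_update_succ_of_le r hij.le,
    sgn_update_succ_of_lt r hij, Ssum_update_succ_of_lt r hij, update_of_ne hij.ne,
    update_of_ne hij.ne', sum_cast_update_succ]
  simp only [Real.sqrt_mul (qb_nonneg hq (by positivity : (0 : ℤ) ≤ r i + 1)),
    Real.sqrt_mul (qb_nonneg hq (by positivity : (0 : ℤ) ≤ r j + 1))]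
  have hshift : q * q ^ (-((Ssum j r + 1 : ℕ) : ℤ)) = q ^ (-(Ssum j r : ℤ)) := by
    rw [Nat.cast_succ, neg_add, zpow_add₀ hq.ne', zpow_neg_one, mul_left_comm,
      mul_inv_cancel₀ hq.ne', mul_one]
  rw [mul_comm (th n j) (th n i), ← hshift]
  rcases neg_one_pow_eq_or ℝ (th n i * th n j) with hsign | hsign <;> rw [hsign] <;> ring

theorem creation_q_supercommute_general (n m p : ℕ)
    (q : ℝ) (hq : 0 < q) (i j : Fin (n + m)) (hij : i < j)
    (r : Fin (n + m) → ℕ) :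
    aP n p q i (aP n p q j (Finsupp.single r 1)) -
        ((-1 : ℝ) ^ (th n i * th n j) * q) •
          aP n p q j (aP n p q i (Finsupp.single r 1)) = 0 := by
  have hraise : update (update r j (r j + 1)) i (update r j (r j + 1) i + 1) =
      update (update r i (r i + 1)) j (update r i (r i + 1) j + 1) := by
    rw [update_of_ne hij.ne, update_of_ne hij.ne', update_comm hij.ne']
  simp only [aP_single, map_smul, smul_smul, hraise,
    creationCoeff_mul_update_succ_of_lt hq hij r, sub_self]

/-- The creation operators q-supercommute: for i < j,
a_i^+ a_j^+ - (-1)^{θ_i θ_j} q · a_j^+ a_i^+ = 0 on W_p. -/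
theorem creation_q_supercommute (n m p : ℕ) (hn : 1 ≤ n) (hm : 1 ≤ m) (hp : 1 ≤ p)
    (q : ℝ) (hq : 0 < q) (hq1 : q ≠ 1) (i j : Fin (n + m)) (hij : i < j)
    (r : Fin (n + m) → ℕ) (hr : valid n p r) :
    aP n p q i (aP n p q j (Finsupp.single r 1)) -
        ((-1 : ℝ) ^ (th n i * th n j) * q) •
          aP n p q j (aP n p q i (Finsupp.single r 1)) = 0 :=
  creation_q_supercommute_general n m p q hq i j hij r
end
end

section
/- With the Fock space operators defined by the explicit action formulas, for every basis vector |p;r) one has: |p;r) is (up to a nonzero scalar) obtainable from the vacuum by applying creation operators, namely (a_1^+)^{r_1}(a_2^+)^{r_2}⋯(a_{n+m}^+)^{r_{n+m}} |p;0,…,0) = √([p]!·[r_1]!⋯[r_{n+m}]!/[p - Σ r_l]!) · s · |p; r_1,…,r_{n+m}) for some sign s ∈ {+1,-1}; in particular this vector is nonzero. -/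
noncomputable section

lemma qb_pos {q : ℝ} (hq : 0 < q) (hq1 : q ≠ 1) {k : ℕ} (hk : 1 ≤ k) :
    0 < qb q (k : ℤ) := by
  have hqne : q ≠ 0 := ne_of_gt hq
  rcases lt_or_gt_of_ne hq1 with h | h
  · have h1 : q ^ (k:ℤ) < q ^ (-(k:ℤ)) := by
      apply zpow_lt_zpow_right_of_lt_one₀ hq h
      omega
    have h2 : q < q⁻¹ := by
      nlinarith [mul_inv_cancel₀ hqne, inv_pos.mpr hq]
    exact div_pos_iff.mpr (Or.inr ⟨by linarith, by linarith⟩)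
  · have h1 : q ^ (-(k:ℤ)) < q ^ (k:ℤ) := by
      apply zpow_lt_zpow_right₀ h
      omega
    have h2 : q⁻¹ < q := by
      nlinarith [mul_inv_cancel₀ hqne, inv_pos.mpr hq]
    exact div_pos (by linarith) (by linarith)

lemma qfact_pos {q : ℝ} (hq : 0 < q) (hq1 : q ≠ 1) (x : ℕ) : 0 < qfact q x := by
  apply Finset.prod_pos
  intro k hk
  simp only [Finset.mem_Icc] at hk
  exact qb_pos hq hq1 hk.1

lemma qfact_succ (q : ℝ) (x : ℕ) : qfact q (x + 1) = qfact q x * qb q ((x:ℤ) + 1) := by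
  rw [qfact, qfact, Finset.prod_Icc_succ_top (by omega)]
  push_cast; ring_nf

lemma qfact_eq_prod_range (q : ℝ) (t : ℕ) :
    qfact q t = ∏ c ∈ Finset.range t, qb q ((c:ℤ) + 1) := by
  induction t with
  | zero => simp [qfact]
  | succ t ih => rw [qfact_succ, Finset.prod_range_succ, ih]

lemma qfact_div_aux (q : ℝ) (u : ℕ) : ∀ t, t ≤ u →
    qfact q u = qfact q (u - t) * ∏ c ∈ Finset.range t, qb q ((u:ℤ) - (c:ℤ)) := by
  intro t
  induction t with
  | zero => simp
  | succ t ih =>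
    intro h
    rw [ih (by omega), Finset.prod_range_succ]
    have h1 : qfact q (u - t) = qfact q (u - (t+1)) * qb q ((u:ℤ) - (t:ℤ)) := by
      have h2 : u - t = (u - (t+1)) + 1 := by omega
      rw [h2, qfact_succ]
      congr 1
      rw [Nat.cast_sub (by omega)]
      push_cast
      ring
    rw [h1]; ring

lemma aP_single_s16 (n : ℕ) {N : ℕ} (p : ℕ) (q : ℝ) (i : Fin N) (r : Fin N → ℕ) :
    aP n p q i (Finsupp.single r 1) =
    (sgn n i r * q ^ (-(Ssum i r : ℤ)) * (1 - (th n i : ℝ) * (r i : ℝ)) *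
      Real.sqrt (qb q ((r i : ℤ) + 1) * qb q ((p : ℤ) - ∑ l, (r l : ℤ)))) •
      Finsupp.single (Function.update r i (r i + 1)) 1 := by
  simp [aP, Finsupp.lift_apply, Finsupp.sum_single_index]

lemma aP_pow_single (n : ℕ) {N : ℕ} (p : ℕ) (q : ℝ) (i : Fin N) (t : ℕ)
    (htf : n ≤ (i : ℕ) → t ≤ 1) (s : Fin N → ℕ)
    (hs : ∀ j : Fin N, (j : ℕ) ≤ (i : ℕ) → s j = 0)
    (hsum : (∑ j, s j) + t ≤ p) :
    (aP n p q i ^ t) (Finsupp.single s 1) =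
      (∏ c ∈ Finset.range t,
        Real.sqrt (qb q ((c : ℤ) + 1) * qb q ((p : ℤ) - (∑ j, (s j : ℤ)) - (c : ℤ)))) •
        Finsupp.single (Function.update s i t) 1 := by
  induction t with
  | zero =>
    simp only [pow_zero, Module.End.one_apply, Finset.range_zero, Finset.prod_empty, one_smul]
    rw [show Function.update s i 0 = s by
      have := hs i le_rfl
      funext j
      rcases eq_or_ne j i with rfl | hj
      · simp [this]
      · simp [Function.update_of_ne hj]]
  | succ t ih =>
    have ht' : n ≤ (i : ℕ) → t ≤ 1 := fun h => le_trans (Nat.le_succ t) (htf h)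
    rw [pow_succ', Module.End.mul_apply, ih ht' (by omega), map_smul, aP_single_s16]
    set s' : Fin N → ℕ := Function.update s i t with hs'
    have hsi : s i = 0 := hs i le_rfl
    have hs'i : s' i = t := by simp [hs']
    -- sign exponent is zero
    have hsgn : sgn n i s' = 1 := by
      rw [sgn]
      have : ∑ j ∈ Finset.univ.filter (fun j : Fin N => j < i), th n j * s' j = 0 := by
        apply Finset.sum_eq_zero
        intro j hj
        simp only [Finset.mem_filter] at hj
        have hjne : j ≠ i := ne_of_lt hj.2
        have : s' j = 0 := by
          rw [hs', Function.update_of_ne hjne]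
          exact hs j (le_of_lt hj.2)
        simp [this]
      simp [this]
    have hSsum : Ssum i s' = 0 := by
      apply Finset.sum_eq_zero
      intro j hj
      simp only [Finset.mem_filter] at hj
      rw [hs', Function.update_of_ne (ne_of_lt hj.2)]
      exact hs j (le_of_lt hj.2)
    have hfac : (1 - (th n i : ℝ) * (s' i : ℝ)) = 1 := by
      rw [hs'i]
      by_cases h : (i : ℕ) < n
      · simp [th, h]
      · have : t = 0 := by omega
        simp [this]
    have hN : ∑ l, s' l = (∑ l, s l) + t := by
      rw [hs', Finset.sum_update_of_mem (Finset.mem_univ i),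
        Finset.sum_eq_sum_sdiff_singleton_add (Finset.mem_univ i) s, hsi]
      omega
    have hsumeq : ∑ l, (s' l : ℤ) = (∑ l, (s l : ℤ)) + t := by
      rw [← Nat.cast_sum, hN]
      push_cast [Nat.cast_sum]
      ring
    rw [hsgn, hSsum, hfac, hs'i, hsumeq, Finset.prod_range_succ, smul_smul]
    rw [show Function.update s' i (t + 1) = Function.update s i (t + 1) from by
      rw [hs', Function.update_idem]]
    simp only [Nat.cast_zero, neg_zero, zpow_zero, one_mul, mul_one]
    rw [show ((p:ℤ) - ((∑ l, (s l : ℤ)) + (t:ℤ))) = ((p:ℤ) - (∑ l, (s l : ℤ)) - (t:ℤ)) from by ring]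

lemma sqrt_prod {t : ℕ} (f : ℕ → ℝ) (hf : ∀ c ∈ Finset.range t, 0 ≤ f c) :
    ∏ c ∈ Finset.range t, Real.sqrt (f c) = Real.sqrt (∏ c ∈ Finset.range t, f c) := by
  induction t with
  | zero => simp
  | succ t ih =>
    rw [Finset.prod_range_succ, Finset.prod_range_succ,
      ih (fun c hc => hf c (by simp at hc ⊢; omega)),
      ← Real.sqrt_mul (Finset.prod_nonneg (fun c hc => hf c (by simp at hc ⊢; omega)))]

lemma tail_foldr (n : ℕ) {N : ℕ} (p : ℕ) (q : ℝ) (hq : 0 < q) (hq1 : q ≠ 1)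
    (r : Fin N → ℕ) (hferm : ∀ i : Fin N, n ≤ (i : ℕ) → r i ≤ 1) (hsr : ∑ i, r i ≤ p) :
    ∀ d k, k ≤ N → N - k = d →
    ((List.ofFn (fun i : Fin N => i)).drop k).foldr (fun i v => (aP n p q i ^ r i) v)
        (Finsupp.single (fun _ => 0) 1 : Wp N) =
      Real.sqrt (qfact q p *
          (∏ j ∈ Finset.univ.filter (fun j : Fin N => k ≤ (j : ℕ)), qfact q (r j)) /
          qfact q (p - ∑ j ∈ Finset.univ.filter (fun j : Fin N => k ≤ (j : ℕ)), r j)) •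
        Finsupp.single (fun j : Fin N => if k ≤ (j : ℕ) then r j else 0) 1 := by
  intro d
  induction d with
  | zero =>
    intro k hk hd
    have hkN : N = k := by omega
    subst hkN
    have hF : Finset.univ.filter (fun j : Fin N => N ≤ (j : ℕ)) = ∅ := by
      apply Finset.filter_false_of_mem
      intro j _
      have := j.2
      omega
    have hfun : (fun j : Fin N => if N ≤ (j : ℕ) then r j else 0) = (fun _ => 0) := by
      funext j
      have := j.2
      rw [if_neg (by omega)]
    rw [hF, hfun]
    simp only [Finset.prod_empty, Finset.sum_empty, mul_one, Nat.sub_zero,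
      div_self (ne_of_gt (qfact_pos hq hq1 p)), Real.sqrt_one, one_smul]
    rw [List.drop_eq_nil_of_le (by simp), List.foldr_nil]
  | succ d ih =>
    intro k hk hd
    have hkN : k < N := by omega
    set i : Fin N := ⟨k, hkN⟩ with hi
    have hdrop : (List.ofFn (fun i : Fin N => i)).drop k =
        i :: (List.ofFn (fun i : Fin N => i)).drop (k + 1) := by
      rw [List.drop_eq_getElem_cons (by simp [hkN])]
      congr 1
      simp [hi]
    rw [hdrop, List.foldr_cons, ih (k + 1) (by omega) (by omega), map_smul]
    set s' : Fin N → ℕ := fun j : Fin N => if k + 1 ≤ (j : ℕ) then r j else 0 with hs'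
    set F' : Finset (Fin N) := Finset.univ.filter (fun j : Fin N => k + 1 ≤ (j : ℕ)) with hF'
    set F : Finset (Fin N) := Finset.univ.filter (fun j : Fin N => k ≤ (j : ℕ)) with hF
    have hiF' : i ∉ F' := by simp [hF', hi]
    have hFins : F = insert i F' := by
      ext j
      simp only [hF, hF', Finset.mem_filter, Finset.mem_insert, Finset.mem_univ, true_and, hi,
        Fin.ext_iff]
      omega
    have hsum_s' : ∑ j, s' j = ∑ j ∈ F', r j := by
      rw [hs', hF', Finset.sum_filter]
    have hS'le : ∑ j ∈ F', r j + r i ≤ p := by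
      have h1 : ∑ j ∈ F, r j ≤ ∑ j, r j :=
        Finset.sum_le_sum_of_subset (Finset.filter_subset _ _)
      rw [hFins, Finset.sum_insert hiF'] at h1
      have h2 := hsr
      omega
    -- apply the power lemma
    rw [aP_pow_single n p q i (r i) (fun h => hferm i h) s'
      (by intro j hj; have hik : (i:ℕ) = k := rfl; rw [hik] at hj; rw [hs']
          exact if_neg (by omega))
      (by rw [hsum_s']; exact hS'le)]
    rw [smul_smul]
    -- identify the resulting basis vector
    have hupd : Function.update s' i (r i) = (fun j : Fin N => if k ≤ (j : ℕ) then r j else 0) := by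
      funext j
      rcases eq_or_ne j i with rfl | hj
      · simp [hi]
      · rw [Function.update_of_ne hj]
        simp only [hs']
        have hjk : (j : ℕ) ≠ k := fun h => hj (Fin.ext h)
        by_cases h : k + 1 ≤ (j : ℕ)
        · rw [if_pos h, if_pos (by omega)]
        · rw [if_neg h, if_neg (by omega)]
    rw [hupd]
    congr 1
    -- scalar computation
    set t : ℕ := r i with hti
    set S' : ℕ := ∑ j ∈ F', r j with hS'
    set P' : ℝ := ∏ j ∈ F', qfact q (r j) with hP'
    have hcast : ∑ j, (s' j : ℤ) = (S' : ℤ) := by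
      rw [← Nat.cast_sum, hsum_s']
    rw [hcast]
    have hup : S' + t ≤ p := hS'le
    have hSins : ∑ j ∈ F, r j = t + S' := by rw [hFins, Finset.sum_insert hiF']
    have hPins : ∏ j ∈ F, qfact q (r j) = qfact q t * P' := by
      rw [hFins, Finset.prod_insert hiF', hP']
    rw [hSins, hPins]
    -- rewrite each qb argument as a ℕ cast and combine square roots
    have hbc : ∀ c ∈ Finset.range t,
        qb q ((c : ℤ) + 1) * qb q ((p : ℤ) - (S' : ℤ) - (c : ℤ)) =
        qb q (((c + 1 : ℕ) : ℤ)) * qb q (((p - S' - c : ℕ) : ℤ)) := by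
      intro c hc
      simp only [Finset.mem_range] at hc
      rw [show ((c : ℤ) + 1) = (((c + 1 : ℕ)) : ℤ) by omega,
        show ((p : ℤ) - (S' : ℤ) - (c : ℤ)) = (((p - S' - c : ℕ)) : ℤ) by omega]
    have hbnn : ∀ c ∈ Finset.range t,
        0 ≤ qb q ((c : ℤ) + 1) * qb q ((p : ℤ) - (S' : ℤ) - (c : ℤ)) := by
      intro c hc
      rw [hbc c hc]
      have h1 := qb_pos hq hq1 (k := c + 1) (by omega)
      have h2 := qb_pos hq hq1 (k := p - S' - c) (by simp at hc; omega)
      positivity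
    have hA'nn : 0 ≤ qfact q p * P' / qfact q (p - S') := by
      have := qfact_pos hq hq1 p
      have := qfact_pos hq hq1 (p - S')
      have : 0 < P' := Finset.prod_pos (fun j _ => qfact_pos hq hq1 _)
      positivity
    rw [sqrt_prod _ hbnn, ← Real.sqrt_mul hA'nn]
    congr 1
    -- pure field computation
    have hprodb : ∏ c ∈ Finset.range t,
        (qb q ((c : ℤ) + 1) * qb q ((p : ℤ) - (S' : ℤ) - (c : ℤ))) =
        qfact q t * (qfact q (p - S') / qfact q (p - S' - t)) := by
      rw [Finset.prod_congr rfl hbc, Finset.prod_mul_distrib]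
      have h1 : ∏ c ∈ Finset.range t, qb q (((c + 1 : ℕ) : ℤ)) = qfact q t := by
        rw [qfact_eq_prod_range]
        apply Finset.prod_congr rfl
        intro c hc
        congr 1
      have h2 : ∏ c ∈ Finset.range t, qb q (((p - S' - c : ℕ) : ℤ)) =
          qfact q (p - S') / qfact q (p - S' - t) := by
        have h3 := qfact_div_aux q (p - S') t (by omega)
        have h4 : ∀ c ∈ Finset.range t, qb q (((p - S' - c : ℕ) : ℤ)) =
            qb q (((p - S' : ℕ) : ℤ) - (c : ℤ)) := by
          intro c hc
          simp only [Finset.mem_range] at hc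
          congr 1
          omega
        rw [Finset.prod_congr rfl h4]
        rw [h3]
        field_simp [ne_of_gt (qfact_pos hq hq1 (p - S' - t))]
      rw [h1, h2]
    rw [hprodb]
    have e1 := ne_of_gt (qfact_pos hq hq1 (p - S'))
    have e2 := ne_of_gt (qfact_pos hq hq1 (p - S' - t))
    have e3 : p - (t + S') = p - S' - t := by omega
    rw [e3]
    field_simp

/-- Every basis vector is obtained (up to a sign and a nonzero normalization)
from the vacuum by the ordered product of creation operators:
(a_1^+)^{r_1}⋯(a_{n+m}^+)^{r_{n+m}} |p;0) = √([p]!∏[r_i]!/[p-Σr]!)·s·|p;r), s = ±1. -/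
theorem ordered_monomial_on_vacuum (n m p : ℕ) (hn : 1 ≤ n) (hm : 1 ≤ m)
    (hp : 1 ≤ p) (q : ℝ) (hq : 0 < q) (hq1 : q ≠ 1)
    (r : Fin (n + m) → ℕ) (hr : valid n p r) :
    ∃ s : ℝ, (s = 1 ∨ s = -1) ∧
      (List.ofFn (fun i : Fin (n + m) => i)).foldr
          (fun i v => (aP n p q i ^ r i) v)
          (Finsupp.single (fun _ => 0) 1 : Wp (n + m)) =
        (Real.sqrt (qfact q p * (∏ i, qfact q (r i)) / qfact q (p - ∑ i, r i)) * s) •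
          Finsupp.single r 1 ∧
      (List.ofFn (fun i : Fin (n + m) => i)).foldr
          (fun i v => (aP n p q i ^ r i) v)
          (Finsupp.single (fun _ => 0) 1 : Wp (n + m)) ≠ 0 := by
  have key := tail_foldr n p q hq hq1 r hr.1 hr.2 (n + m) 0 (by omega) (by omega)
  rw [List.drop_zero] at key
  have hfil : Finset.univ.filter (fun j : Fin (n + m) => 0 ≤ (j : ℕ)) = Finset.univ := by
    simp
  have hfun : (fun j : Fin (n + m) => if 0 ≤ (j : ℕ) then r j else 0) = r := by
    funext j; simp
  rw [hfil, hfun] at key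
  refine ⟨1, Or.inl rfl, ?_, ?_⟩
  · rw [key, mul_one]
  · rw [key]
    apply smul_ne_zero
    · refine ne_of_gt (Real.sqrt_pos.mpr ?_)
      have h1 := qfact_pos hq hq1 p
      have h2 := qfact_pos hq hq1 (p - ∑ i, r i)
      have h3 : 0 < ∏ i, qfact q (r i) := Finset.prod_pos fun i _ => qfact_pos hq hq1 _
      positivity
    · exact fun h => one_ne_zero (Finsupp.single_eq_zero.mp h)
end
end
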